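/- In any MV-algebra M, x⊙y ≤ (x⊙x) ∨ (y⊙y) for all x,y ∈ M. -/
import Mathlib


class MVAlg (M : Type*) where
  add : M → M → M
  compl : M → M
  zero : M
  one : M
  add_comm : ∀ x y, add x y = add y x
  add_assoc : ∀ x y z, add (add x y) z = add x (add y z)
  add_zero : ∀ x, add x zero = x
  compl_compl : ∀ x, compl (compl x) = x
  add_one : ∀ x, add x one = one
  chang : ∀ x y, add x (compl (add x (compl y))) = add y (compl (add y (compl x)))
  compl_zero : compl zero = one

namespace MVAlg

variable {M : Type*} [MVAlg M]

/-- x ⊙ y := (x' ⊕ y')' -/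
def odot (x y : M) : M := compl (add (compl x) (compl y))

/-- x ≤ y iff x' ⊕ y = 1 -/
def le (x y : M) : Prop := add (compl x) y = one

/-- x ∧ y := x ⊙ (x' ⊕ y) -/
def inf (x y : M) : M := odot x (add (compl x) y)

/-- x ∨ y := (x ⊙ y') ⊕ y -/
def sup (x y : M) : M := add (odot x (compl y)) y

/-- x ⊖ y := x ⊙ y' -/
def sub (x y : M) : M := odot x (compl y)

/-- A square root on an MV-algebra. -/
def IsSquareRoot (s : M → M) : Prop :=
  (∀ x : M, odot (s x) (s x) = x) ∧ ∀ x y : M, le (odot y y) x → le y (s x)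

end MVAlg
namespace MVAlg

variable {M : Type*} [MVAlg M]

lemma compl_one : (compl (one : M)) = zero := by
  have h := compl_compl (zero : M); rw [compl_zero] at h; exact h

lemma zero_add (x : M) : add zero x = x := by rw [add_comm, add_zero]
lemma one_add (x : M) : add one x = one := by rw [add_comm, add_one]

lemma add_compl_self (x : M) : add x (compl x) = one := by
  have h := chang (one : M) x
  rw [one_add, compl_one, add_zero] at h
  exact h.symm

lemma compl_add_self (x : M) : add (compl x) x = one := by
  rw [add_comm, add_compl_self]

lemma le_add_left (x t : M) : le x (add t x) := by
  show add (compl x) (add t x) = one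
  rw [add_comm t x, ← add_assoc, compl_add_self, one_add]

lemma le_add_right (x t : M) : le x (add x t) := by
  rw [add_comm]; exact le_add_left x t

lemma sup_eq (x y : M) : sup x y = add (compl (add (compl x) y)) y := by
  unfold sup odot; rw [compl_compl]

lemma sup_comm (x y : M) : sup x y = sup y x := by
  rw [sup_eq, sup_eq, add_comm (compl x) y, add_comm _ y,
      add_comm (compl y) x, add_comm _ x]
  exact chang y x

lemma le_sup_right (x y : M) : le y (sup x y) := by
  rw [sup_eq]; exact le_add_left y _

lemma le_sup_left (x y : M) : le x (sup x y) := by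
  rw [sup_comm]; exact le_sup_right y x

lemma sup_eq_of_le {x y : M} (h : le x y) : sup x y = y := by
  rw [sup_eq, h, compl_one, zero_add]

lemma exists_add_of_le {x y : M} (h : le x y) : ∃ t, y = add t x := by
  refine ⟨compl (add (compl y) x), ?_⟩
  rw [← sup_eq y x, sup_comm, sup_eq_of_le h]

lemma le_trans {x y z : M} (h1 : le x y) (h2 : le y z) : le x z := by
  obtain ⟨t, ht⟩ := exists_add_of_le h1
  obtain ⟨s, hs⟩ := exists_add_of_le h2
  rw [hs, ht, ← add_assoc]
  exact le_add_left x (add s t)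

lemma add_le_add_left {x y : M} (h : le x y) (c : M) : le (add c x) (add c y) := by
  obtain ⟨t, ht⟩ := exists_add_of_le h
  rw [ht, ← add_assoc, add_comm c t, add_assoc]
  exact le_add_left (add c x) t

lemma add_le_add_right {x y : M} (h : le x y) (c : M) : le (add x c) (add y c) := by
  rw [add_comm x c, add_comm y c]; exact add_le_add_left h c

lemma compl_le_compl {x y : M} (h : le x y) : le (compl y) (compl x) := by
  show add (compl (compl y)) (compl x) = one
  rw [compl_compl, add_comm]
  exact h

lemma odot_comm (x y : M) : odot x y = odot y x := by
  unfold odot; rw [add_comm]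

lemma odot_le_left (x y : M) : le (odot x y) x := by
  have h := compl_le_compl (le_add_right (compl x) (compl y))
  rw [compl_compl] at h
  exact h

lemma odot_le_odot_left {x y : M} (h : le x y) (c : M) : le (odot x c) (odot y c) := by
  exact compl_le_compl (add_le_add_right (compl_le_compl h) (compl c))

lemma odot_le_odot_right {x y : M} (h : le x y) (c : M) : le (odot c x) (odot c y) := by
  rw [odot_comm c x, odot_comm c y]; exact odot_le_odot_left h c

lemma sup_le {a b c : M} (h1 : le a c) (h2 : le b c) : le (sup a b) c := by
  have h3 : le (sup a b) (sup c b) :=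
    add_le_add_right (odot_le_odot_left h1 (compl b)) b
  rw [sup_comm c b, sup_eq_of_le h2] at h3
  exact h3

lemma le_sup_sup {a b c d : M} (h1 : le a c) (h2 : le b d) :
    le (sup a b) (sup c d) :=
  sup_le (le_trans h1 (le_sup_left c d)) (le_trans h2 (le_sup_right c d))

lemma inf_eq (x y : M) : inf x y = compl (sup (compl x) (compl y)) := by
  unfold inf sup odot
  rw [compl_compl, compl_compl (compl y)]
  have h := chang (compl y) (compl x)
  rw [compl_compl x, compl_compl y] at h
  rw [add_comm x (compl y), add_comm (compl (add (compl y) x)) (compl y)]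
  exact congrArg MVAlg.compl h.symm

lemma inf_le_left (x y : M) : le (inf x y) x := by
  have h := compl_le_compl (le_sup_left (compl x) (compl y))
  rw [compl_compl, ← inf_eq] at h
  exact h

lemma inf_le_right (x y : M) : le (inf x y) y := by
  have h := compl_le_compl (le_sup_right (compl x) (compl y))
  rw [compl_compl, ← inf_eq] at h
  exact h

lemma sup_compl_eq (a c : M) : sup a (compl c) = add (compl c) (odot a c) := by
  unfold sup; rw [compl_compl, add_comm]

lemma res_mp {a c d : M} (h : le (odot a c) d) : le a (add (compl c) d) := by
  have h1 : le a (add (compl c) (odot a c)) := by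
    rw [← sup_compl_eq]; exact le_sup_left a (compl c)
  exact le_trans h1 (add_le_add_left h (compl c))

lemma res_mpr {a c d : M} (h : le a (add (compl c) d)) : le (odot a c) d := by
  have h1 : le (odot a c) (odot (add (compl c) d) c) := odot_le_odot_left h c
  have h2 : odot (add (compl c) d) c = inf c d := by
    rw [odot_comm]; rfl
  rw [h2] at h1
  exact le_trans h1 (inf_le_right c d)

lemma distrib_le (a b c : M) :
    le (odot (sup a b) c) (sup (odot a c) (odot b c)) := by
  apply res_mpr
  exact sup_le (res_mp (le_sup_left _ _)) (res_mp (le_sup_right _ _))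

lemma add_eq_sup_add_inf (x y : M) : add x y = add (sup x y) (inf x y) := by
  have hinf : inf x y = odot x (compl (odot x (compl y))) := by
    unfold inf odot
    simp only [compl_compl]
  rw [hinf]
  show add x y = add (add (odot x (compl y)) y) (odot x (compl (odot x (compl y))))
  have hx : add (odot x (compl y)) (odot x (compl (odot x (compl y)))) = x := by
    rw [add_comm]
    have h2 : sup x (odot x (compl y)) = x := by
      rw [sup_comm]; exact sup_eq_of_le (odot_le_left x (compl y))
    exact h2
  rw [add_comm (odot x (compl y)) y, add_assoc, hx, add_comm x y]

lemma compl_add (u v : M) : compl (add u v) = odot (compl u) (compl v) := by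
  unfold odot; rw [compl_compl, compl_compl]

lemma compl_sup (x y : M) : compl (sup (compl x) (compl y)) = inf x y :=
  (inf_eq x y).symm

lemma compl_inf (x y : M) : compl (inf (compl x) (compl y)) = sup x y := by
  rw [inf_eq, compl_compl, compl_compl, compl_compl]

lemma odot_eq_sup_inf (x y : M) : odot x y = odot (sup x y) (inf x y) := by
  have h : odot x y = compl (add (compl x) (compl y)) := rfl
  rw [h, add_eq_sup_add_inf (compl x) (compl y), compl_add, compl_sup, compl_inf,
      odot_comm]

end MVAlg

theorem odot_le_sup_squares {M : Type*} [MVAlg M] (x y : M) :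
    MVAlg.le (MVAlg.odot x y) (MVAlg.sup (MVAlg.odot x x) (MVAlg.odot y y)) := by
  rw [MVAlg.odot_eq_sup_inf]
  exact MVAlg.le_trans (MVAlg.distrib_le x y (MVAlg.inf x y))
    (MVAlg.le_sup_sup
      (MVAlg.odot_le_odot_right (MVAlg.inf_le_left x y) x)
      (MVAlg.odot_le_odot_right (MVAlg.inf_le_right x y) y))
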